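/- arXiv:1102.4966 — 2 statements merged into one kernel-verified Lean document; each statement's English description precedes it below -/
import Mathlib

section
/- In the algebra A := Λ ⊗_ℂ U(𝔤𝔩_{n+1}(ℂ)), for every integer k ≥ 1, every i ∈ {1,…,n+1} and every u ∈ ℂ one has Ξ^{(k)}(u) = k·e_i·η_i'(u−k+1)·Ξ^{(k−1)}(u) + (Ξ(u−k+1) − e_i·η_i'(u−k+1))·(Ξ(u−k+2) − e_i·η_i'(u−k+2)) ⋯ (Ξ(u) − e_i·η_i'(u)). -/
open scoped TensorProduct

attribute [local instance 100] LieRing.ofAssociativeRing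

/-- The universal enveloping algebra of `𝔤𝔩_{n+1}(ℂ)`. -/
noncomputable abbrev UglC (n : ℕ) : Type :=
  UniversalEnvelopingAlgebra ℂ (Matrix (Fin (n+1)) (Fin (n+1)) ℂ)

/-- The exterior algebra `Λ(ℂ^{2(n+1)})`, with basis vectors indexed by
`Fin (n+1) ⊕ Fin (n+1)` (the left copy giving the `e_i` and the right copy the `e_i'`). -/
noncomputable abbrev ExtC (n : ℕ) : Type :=
  ExteriorAlgebra ℂ ((Fin (n+1) ⊕ Fin (n+1)) → ℂ)

/-- The algebra `A = Λ(ℂ^{2(n+1)}) ⊗_ℂ U(𝔤𝔩_{n+1}(ℂ))`. -/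
noncomputable abbrev AlgA (n : ℕ) : Type := ExtC n ⊗[ℂ] UglC n

/-- `e_i ∈ A`. -/
noncomputable def eL (n : ℕ) (i : Fin (n+1)) : AlgA n :=
  (ExteriorAlgebra.ι ℂ (Pi.single (Sum.inl i) (1:ℂ))) ⊗ₜ[ℂ] 1

/-- `e_i' ∈ A`. -/
noncomputable def eR (n : ℕ) (i : Fin (n+1)) : AlgA n :=
  (ExteriorAlgebra.ι ℂ (Pi.single (Sum.inr i) (1:ℂ))) ⊗ₜ[ℂ] 1

/-- The image of the matrix unit `E_{ij}` in `A`. -/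
noncomputable def EU (n : ℕ) (i j : Fin (n+1)) : AlgA n :=
  1 ⊗ₜ[ℂ] (UniversalEnvelopingAlgebra.ι ℂ (Matrix.single i j 1))

/-- `E_{ij}(u) = E_{ij} + u δ_{ij} 1`, viewed inside `A`. -/
noncomputable def EUu (n : ℕ) (u : ℂ) (i j : Fin (n+1)) : AlgA n :=
  EU n i j + if i = j then algebraMap ℂ (AlgA n) u else 0

/-- `η_j(u) = Σ_p e_p E_{pj}(u)`. -/
noncomputable def etaL (n : ℕ) (u : ℂ) (j : Fin (n+1)) : AlgA n :=
  ∑ p : Fin (n+1), eL n p * EUu n u p j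

/-- `η_i'(u) = Σ_q e_q' E_{iq}(u)`. -/
noncomputable def etaR (n : ℕ) (u : ℂ) (i : Fin (n+1)) : AlgA n :=
  ∑ q : Fin (n+1), eR n q * EUu n u i q

/-- `Ξ(u) = Σ_{p,q} e_p e_q' E_{pq}(u)`. -/
noncomputable def Xi (n : ℕ) (u : ℂ) : AlgA n :=
  ∑ p : Fin (n+1), ∑ q : Fin (n+1), eL n p * eR n q * EUu n u p q

/-- `Ξ^{(k)}(u) = Ξ(u) Ξ(u−1) ⋯ Ξ(u−k+1)`. -/
noncomputable def XiPow (n : ℕ) (k : ℕ) (u : ℂ) : AlgA n :=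
  ((List.range k).map (fun m => Xi n (u - (m : ℕ)))).prod

namespace XiAux
variable {n : ℕ}

/-- generator of the exterior part, embedded in `AlgA`. -/
noncomputable def gen (n : ℕ) (s : Fin (n+1) ⊕ Fin (n+1)) : AlgA n :=
  (ExteriorAlgebra.ι ℂ (Pi.single s (1:ℂ))) ⊗ₜ[ℂ] 1

lemma eL_eq (i : Fin (n+1)) : eL n i = gen n (Sum.inl i) := rfl
lemma eR_eq (i : Fin (n+1)) : eR n i = gen n (Sum.inr i) := rfl

lemma gen_anticomm (s t : Fin (n+1) ⊕ Fin (n+1)) :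
    gen n s * gen n t = -(gen n t * gen n s) := by
  have h : gen n s * gen n t + gen n t * gen n s = 0 := by
    unfold gen
    rw [Algebra.TensorProduct.tmul_mul_tmul, Algebra.TensorProduct.tmul_mul_tmul,
      one_mul, ← TensorProduct.add_tmul, ExteriorAlgebra.ι_add_mul_swap,
      TensorProduct.zero_tmul]
  exact eq_neg_of_add_eq_zero_left h

lemma gen_sq (s : Fin (n+1) ⊕ Fin (n+1)) : gen n s * gen n s = 0 := by
  unfold gen
  rw [Algebra.TensorProduct.tmul_mul_tmul, one_mul, ExteriorAlgebra.ι_sq_zero,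
    TensorProduct.zero_tmul]

lemma gen_swap (s t : Fin (n+1) ⊕ Fin (n+1)) (x : AlgA n) :
    gen n s * (gen n t * x) = -(gen n t * (gen n s * x)) := by
  rw [← mul_assoc, ← mul_assoc, gen_anticomm, neg_mul]

lemma gen_sq' (s : Fin (n+1) ⊕ Fin (n+1)) (x : AlgA n) :
    gen n s * (gen n s * x) = 0 := by
  rw [← mul_assoc, gen_sq, zero_mul]

lemma EU_comm_gen (p q : Fin (n+1)) (s : Fin (n+1) ⊕ Fin (n+1)) :
    EU n p q * gen n s = gen n s * EU n p q := by
  unfold EU gen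
  rw [Algebra.TensorProduct.tmul_mul_tmul, Algebra.TensorProduct.tmul_mul_tmul,
    one_mul, mul_one, one_mul, mul_one]

lemma EUu_comm_gen (u : ℂ) (p q : Fin (n+1)) (s : Fin (n+1) ⊕ Fin (n+1)) :
    EUu n u p q * gen n s = gen n s * EUu n u p q := by
  unfold EUu
  rw [add_mul, mul_add, EU_comm_gen]
  congr 1
  split
  · exact Algebra.commutes _ _
  · rw [zero_mul, mul_zero]

lemma EUu_swap (u : ℂ) (p q : Fin (n+1)) (s : Fin (n+1) ⊕ Fin (n+1)) (x : AlgA n) :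
    EUu n u p q * (gen n s * x) = gen n s * (EUu n u p q * x) := by
  rw [← mul_assoc, EUu_comm_gen, mul_assoc]

lemma M1 (a b c : Fin (n+1)) (x : AlgA n) :
    eR n a * (eL n c * (eR n b * x)) = -(eR n b * (eL n c * (eR n a * x))) := by
  rw [eL_eq, eR_eq, eR_eq, gen_swap, gen_swap (Sum.inr a) (Sum.inr b), mul_neg, neg_neg,
    gen_swap (Sum.inl c) (Sum.inr b)]

lemma pair_swap (a b c d : Fin (n+1) ⊕ Fin (n+1)) (x : AlgA n) :
    gen n a * (gen n b * (gen n c * (gen n d * x)))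
      = gen n c * (gen n d * (gen n a * (gen n b * x))) := by
  rw [gen_swap b c, mul_neg, gen_swap b d, mul_neg, mul_neg, neg_neg,
    gen_swap a c, gen_swap a d, mul_neg, neg_neg]

lemma EU_mul (p q r s : Fin (n+1)) :
    EU n p q * EU n r s
      = EU n r s * EU n p q
        + ((if q = r then EU n p s else 0) - (if s = p then EU n r q else 0)) := by
  have key : ∀ X Y : Matrix (Fin (n+1)) (Fin (n+1)) ℂ,
      (1 ⊗ₜ[ℂ] (UniversalEnvelopingAlgebra.ι ℂ X) : AlgA n) * (1 ⊗ₜ[ℂ] (UniversalEnvelopingAlgebra.ι ℂ Y))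
        = (1 ⊗ₜ[ℂ] (UniversalEnvelopingAlgebra.ι ℂ Y)) * (1 ⊗ₜ[ℂ] (UniversalEnvelopingAlgebra.ι ℂ X))
          + 1 ⊗ₜ[ℂ] (UniversalEnvelopingAlgebra.ι ℂ (X * Y - Y * X)) := by
    intro X Y
    have h := (UniversalEnvelopingAlgebra.ι ℂ
      (L := Matrix (Fin (n+1)) (Fin (n+1)) ℂ)).map_lie X Y
    rw [Ring.lie_def, Ring.lie_def] at h
    rw [Algebra.TensorProduct.tmul_mul_tmul, Algebra.TensorProduct.tmul_mul_tmul,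
      one_mul, ← TensorProduct.tmul_add]
    congr 1
    rw [h]
    abel
  unfold EU
  rw [key]
  congr 1
  rw [map_sub, TensorProduct.tmul_sub]
  by_cases hqr : q = r <;> by_cases hsp : s = p
  · subst hqr; subst hsp; simp
  · subst hqr; simp [hsp]
  · subst hsp; simp [hqr]
  · simp [hqr, hsp]

lemma abstract_shift {R : Type*} [Ring R] [Algebra ℂ R] (A B S : R) (a b w : ℂ)
    (h : A * B = B * A + S) :
    (A + algebraMap ℂ R (w * a)) * (B + algebraMap ℂ R ((w+1) * b))
      = (B + algebraMap ℂ R (w * b)) * (A + algebraMap ℂ R ((w+1) * a))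
        + (S + algebraMap ℂ R b * A - algebraMap ℂ R a * B) := by
  have hA : ∀ c : ℂ, A * algebraMap ℂ R c = algebraMap ℂ R c * A :=
    fun c => (Algebra.commutes c A).symm
  have hB : ∀ c : ℂ, B * algebraMap ℂ R c = algebraMap ℂ R c * B :=
    fun c => (Algebra.commutes c B).symm
  simp only [mul_add, add_mul, h, hA _, hB _, ← map_mul]
  simp only [map_add, map_mul, one_mul, add_mul]
  simp only [← map_mul]
  ring_nf
  abel

lemma ite_algebraMap (c : Prop) [Decidable c] (u : ℂ) :
    (if c then algebraMap ℂ (AlgA n) u else 0)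
      = algebraMap ℂ (AlgA n) (u * (if c then (1:ℂ) else 0)) := by
  split <;> simp

lemma EUu_shift (w : ℂ) (p q r s : Fin (n+1)) :
    EUu n w p q * EUu n (w+1) r s
      = EUu n w r s * EUu n (w+1) p q
        + (((if q = r then EU n p s else 0) - (if s = p then EU n r q else 0))
           + ((if r = s then EU n p q else 0) - (if p = q then EU n r s else 0))) := by
  unfold EUu
  rw [ite_algebraMap (p = q) w, ite_algebraMap (r = s) (w+1),
    ite_algebraMap (r = s) w, ite_algebraMap (p = q) (w+1)]
  rw [abstract_shift _ _ _ _ _ w (EU_mul p q r s)]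
  have hb : algebraMap ℂ (AlgA n) (if r = s then (1:ℂ) else 0) * EU n p q
      = (if r = s then EU n p q else 0) := by
    split <;> simp [← Algebra.TensorProduct.one_def]
  have ha : algebraMap ℂ (AlgA n) (if p = q then (1:ℂ) else 0) * EU n r s
      = (if p = q then EU n r s else 0) := by
    split <;> simp [← Algebra.TensorProduct.one_def]
  rw [hb, ha]
  abel

lemma M1g (a c b : Fin (n+1)) (x : AlgA n) :
    gen n (Sum.inr a) * (gen n (Sum.inl c) * (gen n (Sum.inr b) * x))
      = -(gen n (Sum.inr b) * (gen n (Sum.inl c) * (gen n (Sum.inr a) * x))) := by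
  rw [gen_swap, gen_swap (Sum.inr a) (Sum.inr b), mul_neg, neg_neg,
    gen_swap (Sum.inl c) (Sum.inr b)]

lemma sum3_cycle (f : Fin (n+1) → Fin (n+1) → Fin (n+1) → AlgA n) :
    (∑ a : Fin (n+1), ∑ b : Fin (n+1), ∑ c : Fin (n+1), f a b c)
      = ∑ b : Fin (n+1), ∑ c : Fin (n+1), ∑ a : Fin (n+1), f a b c := by
  rw [Finset.sum_comm]
  exact Finset.sum_congr rfl fun b _ => Finset.sum_comm

lemma hL (w : ℂ) (i : Fin (n+1)) :
    Xi n w * (eL n i * etaR n (w+1) i)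
      = ∑ p : Fin (n+1), ∑ q : Fin (n+1), ∑ r : Fin (n+1),
          gen n (Sum.inl p) * (gen n (Sum.inr q) * (gen n (Sum.inl i) *
            (gen n (Sum.inr r) * (EUu n w p q * EUu n (w+1) i r)))) := by
  unfold Xi etaR
  simp only [Finset.sum_mul, Finset.mul_sum]
  rw [← sum3_cycle (fun r p q => gen n (Sum.inl p) * (gen n (Sum.inr q) *
    (gen n (Sum.inl i) * (gen n (Sum.inr r) * (EUu n w p q * EUu n (w+1) i r)))))]
  refine Finset.sum_congr rfl fun r _ => Finset.sum_congr rfl fun p _ =>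
    Finset.sum_congr rfl fun q _ => ?_
  simp only [eL_eq, eR_eq, mul_assoc]
  rw [EUu_swap, EUu_swap]

lemma hR (w : ℂ) (i : Fin (n+1)) :
    (eL n i * etaR n w i) * Xi n (w+1)
      = ∑ p : Fin (n+1), ∑ q : Fin (n+1), ∑ r : Fin (n+1),
          gen n (Sum.inl p) * (gen n (Sum.inr q) * (gen n (Sum.inl i) *
            (gen n (Sum.inr r) * (EUu n w i r * EUu n (w+1) p q)))) := by
  unfold Xi etaR
  simp only [Finset.sum_mul, Finset.mul_sum]
  refine Finset.sum_congr rfl fun p _ => Finset.sum_congr rfl fun q _ =>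
    Finset.sum_congr rfl fun r _ => ?_
  simp only [eL_eq, eR_eq, mul_assoc]
  rw [EUu_swap, EUu_swap, pair_swap]

lemma cancel1 (i : Fin (n+1)) (g : Fin (n+1) → Fin (n+1) → AlgA n) :
    (∑ x : Fin (n+1), ∑ y : Fin (n+1),
        gen n (Sum.inl x) * (gen n (Sum.inr i) * (gen n (Sum.inl i) * (gen n (Sum.inr y) * g x y))))
      + (∑ x : Fin (n+1), ∑ y : Fin (n+1),
        gen n (Sum.inl x) * (gen n (Sum.inr y) * (gen n (Sum.inl i) * (gen n (Sum.inr i) * g x y))))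
      = 0 := by
  rw [← Finset.sum_add_distrib]
  refine Finset.sum_eq_zero fun x _ => ?_
  rw [← Finset.sum_add_distrib]
  refine Finset.sum_eq_zero fun y _ => ?_
  rw [M1g, mul_neg, neg_add_cancel]

lemma cancel2 (i : Fin (n+1)) (g : Fin (n+1) → Fin (n+1) → AlgA n) :
    (∑ x : Fin (n+1), ∑ y : Fin (n+1),
        gen n (Sum.inl x) * (gen n (Sum.inr y) * (gen n (Sum.inl i) * (gen n (Sum.inr x) * g x y))))
      + (∑ x : Fin (n+1), ∑ y : Fin (n+1),
        gen n (Sum.inl x) * (gen n (Sum.inr x) * (gen n (Sum.inl i) * (gen n (Sum.inr y) * g x y))))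
      = 0 := by
  rw [← Finset.sum_add_distrib]
  refine Finset.sum_eq_zero fun x _ => ?_
  rw [← Finset.sum_add_distrib]
  refine Finset.sum_eq_zero fun y _ => ?_
  rw [M1g, mul_neg, neg_add_cancel]

lemma L2 (w : ℂ) (i : Fin (n+1)) :
    Xi n w * (eL n i * etaR n (w+1) i) = (eL n i * etaR n w i) * Xi n (w+1) := by
  rw [← sub_eq_zero, hL, hR]
  simp only [← Finset.sum_sub_distrib, ← mul_sub]
  have hD : ∀ p q r : Fin (n+1),
      EUu n w p q * EUu n (w+1) i r - EUu n w i r * EUu n (w+1) p q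
        = ((if q = i then EU n p r else 0) - (if r = p then EU n i q else 0))
          + ((if i = r then EU n p q else 0) - (if p = q then EU n i r else 0)) := by
    intro p q r
    rw [EUu_shift w p q i r]
    abel
  simp only [hD]
  simp only [mul_add, mul_sub, mul_ite, mul_zero]
  simp only [Finset.sum_add_distrib, Finset.sum_sub_distrib]
  simp only [Finset.sum_ite_irrel, Finset.sum_const_zero, Finset.sum_ite_eq,
    Finset.sum_ite_eq', Finset.mem_univ, if_true]
  have e1 := cancel1 (n := n) i (fun x y => EU n x y)
  have e2 := cancel2 (n := n) i (fun x y => EU n i y)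
  beta_reduce at e1 e2
  rw [sub_add_sub_comm, e1, e2, sub_self]

lemma etaR_mul_eL_self (v : ℂ) (i j : Fin (n+1)) (x : AlgA n) :
    etaR n v i * (eL n j * x) = -(eL n j * (etaR n v i * x)) := by
  unfold etaR
  rw [Finset.sum_mul]
  have step : ∀ q : Fin (n+1), (eR n q * EUu n v i q) * (eL n j * x)
      = -(eL n j * ((eR n q * EUu n v i q) * x)) := by
    intro q
    simp only [eL_eq, eR_eq, mul_assoc]
    rw [EUu_swap, gen_swap]
  simp only [step]
  rw [Finset.sum_neg_distrib, ← Finset.mul_sum, ← Finset.sum_mul]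

lemma L1 (v w : ℂ) (i : Fin (n+1)) :
    (eL n i * etaR n v i) * (eL n i * etaR n w i) = 0 := by
  rw [mul_assoc, etaR_mul_eL_self, mul_neg, eL_eq, gen_sq', neg_zero]

/-- `F = Σ_p e_p e_p'`. -/
noncomputable def FF (n : ℕ) : AlgA n := ∑ p : Fin (n+1), gen n (Sum.inl p) * gen n (Sum.inr p)

lemma EUu_sub (v w : ℂ) (p q : Fin (n+1)) :
    EUu n v p q = EUu n w p q + (if p = q then algebraMap ℂ (AlgA n) (v - w) else 0) := by
  unfold EUu
  by_cases h : p = q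
  · rw [if_pos h, if_pos h, if_pos h, add_assoc, ← RingHom.map_add]
    congr 2
    ring
  · rw [if_neg h, if_neg h, if_neg h, add_zero, add_zero]

lemma FF_comm (w : ℂ) : FF n * Xi n w = Xi n w * FF n := by
  unfold FF Xi
  simp only [Finset.sum_mul, Finset.mul_sum]
  rw [sum3_cycle (fun a b c => eL n b * eR n c * EUu n w b c *
    (gen n (Sum.inl a) * gen n (Sum.inr a)))]
  refine Finset.sum_congr rfl fun p _ => Finset.sum_congr rfl fun q _ =>
    Finset.sum_congr rfl fun f _ => ?_
  simp only [eL_eq, eR_eq, mul_assoc]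
  rw [pair_swap, EUu_swap, EUu_comm_gen]

lemma Xi_decomp (v w : ℂ) :
    Xi n v = Xi n w + algebraMap ℂ (AlgA n) (v - w) * FF n := by
  unfold Xi FF
  simp only [EUu_sub v w, mul_add]
  simp only [Finset.sum_add_distrib]
  congr 1
  simp only [mul_ite, mul_zero, Finset.sum_ite_eq, Finset.sum_ite_eq',
    Finset.mem_univ, if_true]
  rw [Finset.mul_sum]
  refine Finset.sum_congr rfl fun p _ => ?_
  rw [eL_eq, eR_eq, ← Algebra.commutes]

lemma Xi_comm (v w : ℂ) : Xi n v * Xi n w = Xi n w * Xi n v := by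
  rw [Xi_decomp v w, add_mul, mul_add]
  congr 1
  rw [mul_assoc, FF_comm, ← mul_assoc, Algebra.commutes, mul_assoc]

/-- ascending product -/
noncomputable def XiAsc (n : ℕ) (k : ℕ) (v : ℂ) : AlgA n :=
  ((List.range k).map (fun m => Xi n (v + (m : ℕ)))).prod

lemma XiAsc_zero (v : ℂ) : XiAsc n 0 v = 1 := rfl

lemma XiAsc_succ (k : ℕ) (v : ℂ) : XiAsc n (k+1) v = Xi n v * XiAsc n k (v+1) := by
  unfold XiAsc
  rw [List.range_succ_eq_map, List.map_cons, List.prod_cons, List.map_map]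
  congr 1
  · norm_num
  · refine congrArg List.prod (List.map_congr_left fun m _ => ?_)
    simp only [Function.comp_apply]
    congr 1
    push_cast
    ring

lemma XiPow_succ (k : ℕ) (u : ℂ) : XiPow n (k+1) u = XiPow n k u * Xi n (u - k) := by
  unfold XiPow
  rw [List.range_succ, List.map_append, List.prod_append]
  simp

lemma Xi_comm_XiPow (w : ℂ) (k : ℕ) (u : ℂ) :
    Xi n w * XiPow n k u = XiPow n k u * Xi n w := by
  induction k with
  | zero => simp [XiPow]
  | succ k ih =>
      rw [XiPow_succ, ← mul_assoc, ih, mul_assoc, Xi_comm, ← mul_assoc]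

lemma XiPow_eq_asc (k : ℕ) (u : ℂ) : XiPow n k u = XiAsc n k (u - k + 1) := by
  induction k with
  | zero => simp [XiPow, XiAsc]
  | succ k ih =>
      rw [XiPow_succ, XiAsc_succ, ih]
      have h1 : (u - ((k:ℕ)+1:ℕ) + 1 : ℂ) = u - k := by push_cast; ring
      have h2 : (u - ((k:ℕ)+1:ℕ) + 1 + 1 : ℂ) = u - k + 1 := by push_cast; ring
      rw [h1, ← ih]
      exact (Xi_comm_XiPow _ _ _).symm

lemma key (i : Fin (n+1)) (v : ℂ) (k : ℕ) :
    ((List.range k).map (fun m => Xi n (v + (m : ℕ)) - eL n i * etaR n (v + (m : ℕ)) i)).prod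
      = XiAsc n k v - k • ((eL n i * etaR n v i) * XiAsc n (k-1) (v+1)) := by
  induction k generalizing v with
  | zero => simp [XiAsc_zero]
  | succ k ih =>
      have hpeel : ((List.range (k+1)).map
            (fun m => Xi n (v + (m:ℕ)) - eL n i * etaR n (v + (m:ℕ)) i)).prod
          = (Xi n v - eL n i * etaR n v i) *
            ((List.range k).map
              (fun m => Xi n ((v+1) + (m:ℕ)) - eL n i * etaR n ((v+1) + (m:ℕ)) i)).prod := by
        rw [List.range_succ_eq_map, List.map_cons, List.prod_cons, List.map_map]
        congr 1
        · norm_num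
        · refine congrArg List.prod (List.map_congr_left fun m _ => ?_)
          simp only [Function.comp_apply]
          have harg : (v + ((m+1 : ℕ) : ℂ)) = (v + 1 + (m : ℕ)) := by push_cast; ring
          rw [harg]
      cases k with
      | zero =>
          rw [hpeel, ih (v+1)]
          simp [XiAsc_zero, XiAsc_succ]
      | succ k' =>
          rw [hpeel, ih (v+1)]
          simp only [Nat.succ_sub_one]
          rw [XiAsc_succ (k := k'+1) (v := v)]
          have hBB := L1 (n := n) v (v+1) i
          have hXB := L2 (n := n) v i
          have hX : Xi n v * (eL n i * etaR n (v+1) i * XiAsc n k' (v+1+1))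
              = eL n i * etaR n v i * XiAsc n (k'+1) (v+1) := by
            rw [← mul_assoc, hXB, mul_assoc, ← XiAsc_succ]
          have hB0 : (eL n i * etaR n v i) * (eL n i * etaR n (v+1) i * XiAsc n k' (v+1+1))
              = 0 := by
            rw [← mul_assoc, hBB, zero_mul]
          rw [mul_sub, sub_mul, sub_mul, mul_smul_comm, mul_smul_comm, hX, hB0,
            smul_zero, sub_zero,
            succ_nsmul (eL n i * etaR n v i * XiAsc n (k'+1) (v+1)) (k'+1)]
          abel

end XiAux

/-- In `A = Λ ⊗ U(𝔤𝔩_{n+1}(ℂ))`, for every `k ≥ 1`, every `i` and every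
`u ∈ ℂ`:
`Ξ^{(k)}(u) = k e_i η_i'(u−k+1) Ξ^{(k−1)}(u)
  + (Ξ(u−k+1) − e_i η_i'(u−k+1))(Ξ(u−k+2) − e_i η_i'(u−k+2)) ⋯ (Ξ(u) − e_i η_i'(u))`. -/
theorem XiPow_expansion_right (n : ℕ) (k : ℕ) (hk : 1 ≤ k) (i : Fin (n+1)) (u : ℂ) :
    XiPow n k u
      = k • (eL n i * etaR n (u - k + 1) i * XiPow n (k-1) u)
        + ((List.range k).map
            (fun m => Xi n (u - k + 1 + (m : ℕ))
                      - eL n i * etaR n (u - k + 1 + (m : ℕ)) i)).prod := by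
  have hk1 : XiPow n (k-1) u = XiAux.XiAsc n (k-1) (u - (k:ℂ) + 1 + 1) := by
    rw [XiAux.XiPow_eq_asc]
    congr 1
    have hc : ((k-1:ℕ):ℂ) = (k:ℂ) - 1 := by
      have h := Nat.cast_sub (R := ℂ) hk
      simpa using h
    rw [hc]; ring
  have hmain := XiAux.key (n := n) i (u - (k:ℂ) + 1) k
  rw [XiAux.XiPow_eq_asc, hmain, hk1]
  exact (add_sub_cancel _ _).symm
end

section
/- In the algebra A := Λ ⊗_ℂ U(𝔤𝔩_{n+1}(ℂ)), for all i, j ∈ {1,…,n+1} with i ≠ j and all u ∈ ℂ one has e_j·Ξ^{(n)}(u+n−1) = n · e_j·e_i·η_i'(u)·Ξ^{(n−1)}(u+n−1). -/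
open scoped TensorProduct

attribute [local instance 100] LieRing.ofAssociativeRing
set_option maxHeartbeats 1600000

section Basics
variable {n : ℕ}

lemma tmul_swap (x y : ExtC n) :
    (x ⊗ₜ[ℂ] (1:UglC n)) * (y ⊗ₜ[ℂ] (1:UglC n)) = (x*y) ⊗ₜ[ℂ] 1 := by
  rw [Algebra.TensorProduct.tmul_mul_tmul, mul_one]

lemma eL_mul_eL (p q : Fin (n+1)) : eL n p * eL n q = -(eL n q * eL n p) := by
  simp only [eL, tmul_swap]
  rw [eq_neg_iff_add_eq_zero, ← TensorProduct.add_tmul,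
    ExteriorAlgebra.ι_add_mul_swap, TensorProduct.zero_tmul]

lemma eL_mul_self (p : Fin (n+1)) : eL n p * eL n p = 0 := by
  simp only [eL, tmul_swap]
  rw [ExteriorAlgebra.ι_sq_zero, TensorProduct.zero_tmul]

lemma eR_mul_eR (p q : Fin (n+1)) : eR n p * eR n q = -(eR n q * eR n p) := by
  simp only [eR, tmul_swap]
  rw [eq_neg_iff_add_eq_zero, ← TensorProduct.add_tmul,
    ExteriorAlgebra.ι_add_mul_swap, TensorProduct.zero_tmul]

lemma eL_mul_eR (p q : Fin (n+1)) : eL n p * eR n q = -(eR n q * eL n p) := by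
  simp only [eL, eR, tmul_swap]
  rw [eq_neg_iff_add_eq_zero, ← TensorProduct.add_tmul,
    ExteriorAlgebra.ι_add_mul_swap, TensorProduct.zero_tmul]

lemma eR_mul_eL (p q : Fin (n+1)) : eR n p * eL n q = -(eL n q * eR n p) := by
  rw [eL_mul_eR, neg_neg]

lemma EU_comm_eL (a b p : Fin (n+1)) : EU n a b * eL n p = eL n p * EU n a b := by
  simp only [EU, eL, Algebra.TensorProduct.tmul_mul_tmul, one_mul, mul_one]

lemma EU_comm_eR (a b p : Fin (n+1)) : EU n a b * eR n p = eR n p * EU n a b := by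
  simp only [EU, eR, Algebra.TensorProduct.tmul_mul_tmul, one_mul, mul_one]

lemma EUu_comm_eL (u : ℂ) (a b p : Fin (n+1)) :
    EUu n u a b * eL n p = eL n p * EUu n u a b := by
  simp only [EUu, add_mul, mul_add, EU_comm_eL]
  congr 1
  split_ifs
  · exact Algebra.commutes _ _
  · simp

lemma EUu_comm_eR (u : ℂ) (a b p : Fin (n+1)) :
    EUu n u a b * eR n p = eR n p * EUu n u a b := by
  simp only [EUu, add_mul, mul_add, EU_comm_eR]
  congr 1
  split_ifs
  · exact Algebra.commutes _ _
  · simp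

lemma EU_mul_EU (a q b r : Fin (n+1)) :
    EU n a q * EU n b r - EU n b r * EU n a q
      = (if q = b then EU n a r else 0) - (if r = a then EU n b q else 0) := by
  unfold EU
  rw [Algebra.TensorProduct.tmul_mul_tmul, Algebra.TensorProduct.tmul_mul_tmul, one_mul,
    ← TensorProduct.tmul_sub]
  have hlie :
      (UniversalEnvelopingAlgebra.ι ℂ (Matrix.single a q (1:ℂ))) *
        (UniversalEnvelopingAlgebra.ι ℂ (Matrix.single b r (1:ℂ))) -
      (UniversalEnvelopingAlgebra.ι ℂ (Matrix.single b r (1:ℂ))) *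
        (UniversalEnvelopingAlgebra.ι ℂ (Matrix.single a q (1:ℂ)))
      = UniversalEnvelopingAlgebra.ι ℂ
          ⁅Matrix.single a q (1:ℂ), Matrix.single b r (1:ℂ)⁆ := by
    rw [LieHom.map_lie, Ring.lie_def]
  rw [hlie, LieRing.of_associative_ring_bracket]
  have hb : Matrix.single a q (1:ℂ) * Matrix.single b r (1:ℂ)
      = if q = b then Matrix.single a r (1:ℂ) else 0 := by
    split_ifs with h
    · subst h; simpa using Matrix.single_mul_single_same (c := (1:ℂ)) a q r 1
    · exact Matrix.single_mul_single_of_ne (c := (1:ℂ)) a q b h 1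
  have ha : Matrix.single b r (1:ℂ) * Matrix.single a q (1:ℂ)
      = if r = a then Matrix.single b q (1:ℂ) else 0 := by
    split_ifs with h
    · subst h; simpa using Matrix.single_mul_single_same (c := (1:ℂ)) b r q 1
    · exact Matrix.single_mul_single_of_ne (c := (1:ℂ)) b r a h 1
  rw [hb, ha, map_sub]
  split_ifs <;> simp [TensorProduct.tmul_sub, TensorProduct.tmul_neg, map_zero]

lemma EU_swap (a q b r : Fin (n+1)) :
    EU n a q * EU n b r = EU n b r * EU n a q
      + ((if b = q then EU n a r else 0) - (if a = r then EU n b q else 0)) := by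
  have h := EU_mul_EU a q b r
  rw [sub_eq_iff_eq_add] at h
  rw [h]
  have h1 : (if q = b then EU n a r else 0) = (if b = q then EU n a r else 0) :=
    if_congr eq_comm rfl rfl
  have h2 : (if r = a then EU n b q else 0) = (if a = r then EU n b q else 0) :=
    if_congr eq_comm rfl rfl
  rw [h1, h2]; exact add_comm _ _

lemma EUu_eq_smul (v : ℂ) (x y : Fin (n+1)) :
    EUu n v x y = EU n x y + if x = y then v • (1:AlgA n) else 0 := by
  unfold EUu; rw [Algebra.algebraMap_eq_smul_one]

lemma sym2 (u : ℂ) (a b q r : Fin (n+1)) :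
    EUu n u a q * EUu n (u+1) b r + EUu n u b q * EUu n (u+1) a r
  = EUu n u a r * EUu n (u+1) b q + EUu n u b r * EUu n (u+1) a q := by
  have e1 := EU_swap a r b q
  have e2 := EU_swap b r a q
  simp only [EUu_eq_smul]
  simp only [mul_add, add_mul]
  rw [e1, e2]
  split_ifs <;>
    simp only [smul_mul_assoc, mul_smul_comm, one_mul, mul_one, smul_smul, zero_mul, mul_zero,
      add_zero, zero_add, smul_zero] <;>
    module

-- rearrangement helpers
lemma midswapRR (q r : Fin (n+1)) (X Y : AlgA n) (hX : X * eR n r = eR n r * X) :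
    (eR n q * X) * (eR n r * Y) = eR n q * eR n r * (X * Y) := by
  rw [mul_assoc, ← mul_assoc X, hX, mul_assoc, ← mul_assoc, ← mul_assoc]

lemma midswapRL (p q r : Fin (n+1)) (X Y : AlgA n)
    (hXL : X * eL n p = eL n p * X) (hXR : X * eR n r = eR n r * X) :
    (eR n q * X) * (eL n p * eR n r * Y) = -(eL n p * (eR n q * eR n r * (X * Y))) := by
  calc (eR n q * X) * (eL n p * eR n r * Y)
      = eR n q * ((X * eL n p) * (eR n r * Y)) := by simp only [mul_assoc]
    _ = eR n q * (eL n p * ((X * eR n r) * Y)) := by rw [hXL]; simp only [mul_assoc]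
    _ = (eR n q * eL n p) * ((eR n r * X) * Y) := by rw [hXR]; simp only [mul_assoc]
    _ = (-(eL n p * eR n q)) * ((eR n r * X) * Y) := by rw [eR_mul_eL]
    _ = -(eL n p * (eR n q * eR n r * (X * Y))) := by simp only [neg_mul, mul_assoc]

-- the key antisymmetrization
lemma GS (u : ℂ) (a b : Fin (n+1)) :
    ∑ q : Fin (n+1), ∑ r : Fin (n+1), eR n q * eR n r *
      (EUu n u a q * EUu n (u+1) b r + EUu n u b q * EUu n (u+1) a r) = 0 := by
  set f : Fin (n+1) → Fin (n+1) → AlgA n := fun q r => eR n q * eR n r *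
      (EUu n u a q * EUu n (u+1) b r + EUu n u b q * EUu n (u+1) a r) with hf
  have hanti : ∀ q r, f r q = -f q r := by
    intro q r
    simp only [hf]
    rw [eR_mul_eR, sym2, neg_mul]
  have hswap : ∑ q : Fin (n+1), ∑ r : Fin (n+1), f q r
      = -∑ q : Fin (n+1), ∑ r : Fin (n+1), f q r := by
    conv_lhs => rw [Finset.sum_comm]
    rw [← Finset.sum_neg_distrib]
    refine Finset.sum_congr rfl fun q _ => ?_
    rw [← Finset.sum_neg_distrib]
    exact Finset.sum_congr rfl fun r _ => hanti q r
  have h2 : (2:ℂ) • ∑ q : Fin (n+1), ∑ r : Fin (n+1), f q r = 0 := by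
    rw [two_smul]
    nth_rewrite 2 [hswap]
    exact add_neg_cancel _
  calc ∑ q : Fin (n+1), ∑ r : Fin (n+1), f q r
      = ((2:ℂ)⁻¹ * 2) • ∑ q : Fin (n+1), ∑ r : Fin (n+1), f q r := by norm_num
    _ = (2:ℂ)⁻¹ • ((2:ℂ) • ∑ q : Fin (n+1), ∑ r : Fin (n+1), f q r) := by rw [smul_smul]
    _ = 0 := by rw [h2, smul_zero]

lemma etaR_pair (u : ℂ) (a b : Fin (n+1)) :
    etaR n u a * etaR n (u+1) b + etaR n u b * etaR n (u+1) a = 0 := by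
  have expand : ∀ (x y : Fin (n+1)), etaR n u x * etaR n (u+1) y
      = ∑ q : Fin (n+1), ∑ r : Fin (n+1),
          eR n q * eR n r * (EUu n u x q * EUu n (u+1) y r) := by
    intro x y
    unfold etaR
    rw [Finset.sum_mul_sum]
    exact Finset.sum_congr rfl fun q _ => Finset.sum_congr rfl fun r _ =>
      midswapRR q r _ _ (EUu_comm_eR _ _ _ _)
  rw [expand, expand, ← Finset.sum_add_distrib, ← GS u a b]
  refine Finset.sum_congr rfl fun q _ => ?_
  rw [← Finset.sum_add_distrib]
  exact Finset.sum_congr rfl fun r _ => (mul_add _ _ _).symm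

lemma etaR_Xi (u : ℂ) (i : Fin (n+1)) :
    etaR n u i * Xi n (u+1) = Xi n u * etaR n (u+1) i := by
  rw [← sub_eq_zero]
  have h1 : etaR n u i * Xi n (u+1)
      = ∑ p : Fin (n+1), -(eL n p * ∑ q : Fin (n+1), ∑ r : Fin (n+1),
          eR n q * eR n r * (EUu n u i q * EUu n (u+1) p r)) := by
    unfold etaR Xi
    rw [Finset.sum_mul_sum, Finset.sum_comm]
    refine Finset.sum_congr rfl fun p _ => ?_
    rw [Finset.mul_sum, ← Finset.sum_neg_distrib]
    refine Finset.sum_congr rfl fun q _ => ?_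
    rw [Finset.mul_sum, Finset.mul_sum, ← Finset.sum_neg_distrib]
    refine Finset.sum_congr rfl fun r _ => ?_
    exact midswapRL p q r _ _ (EUu_comm_eL _ _ _ _) (EUu_comm_eR _ _ _ _)
  have h2 : Xi n u * etaR n (u+1) i
      = ∑ p : Fin (n+1), eL n p * ∑ q : Fin (n+1), ∑ r : Fin (n+1),
          eR n q * eR n r * (EUu n u p q * EUu n (u+1) i r) := by
    unfold etaR Xi
    rw [Finset.sum_mul]
    refine Finset.sum_congr rfl fun p _ => ?_
    rw [Finset.sum_mul, Finset.mul_sum]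
    refine Finset.sum_congr rfl fun q _ => ?_
    rw [Finset.mul_sum, Finset.mul_sum]
    refine Finset.sum_congr rfl fun r _ => ?_
    calc (eL n p * eR n q * EUu n u p q) * (eR n r * EUu n (u+1) i r)
        = eL n p * (eR n q * ((EUu n u p q * eR n r) * EUu n (u+1) i r)) := by
          simp only [mul_assoc]
      _ = eL n p * (eR n q * (eR n r * (EUu n u p q * EUu n (u+1) i r))) := by
          rw [EUu_comm_eR]; simp only [mul_assoc]
      _ = eL n p * (eR n q * eR n r * (EUu n u p q * EUu n (u+1) i r)) := by
          simp only [mul_assoc]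
  rw [h1, h2, ← Finset.sum_sub_distrib]
  refine Finset.sum_eq_zero fun p _ => ?_
  have hS : (∑ q : Fin (n+1), ∑ r : Fin (n+1),
        eR n q * eR n r * (EUu n u i q * EUu n (u+1) p r))
      + (∑ q : Fin (n+1), ∑ r : Fin (n+1),
        eR n q * eR n r * (EUu n u p q * EUu n (u+1) i r)) = 0 := by
    rw [add_comm, ← Finset.sum_add_distrib, ← GS u p i]
    refine Finset.sum_congr rfl fun q _ => ?_
    rw [← Finset.sum_add_distrib]
    exact Finset.sum_congr rfl fun r _ => (mul_add _ _ _).symm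
  rw [sub_eq_add_neg, ← neg_add, ← mul_add, hS, mul_zero, neg_zero]

end Basics

section Struct
variable {n : ℕ}

noncomputable def omegaA (n : ℕ) : AlgA n := ∑ p : Fin (n+1), eL n p * eR n p

lemma EUu_shift (u v : ℂ) (x y : Fin (n+1)) :
    EUu n u x y = EUu n v x y + if x = y then (u - v) • (1:AlgA n) else 0 := by
  simp only [EUu_eq_smul]
  split_ifs with h
  · rw [add_assoc, ← add_smul, show v + (u - v) = u by ring]
  · simp

lemma Xi_shift (u v : ℂ) : Xi n u = Xi n v + (u - v) • omegaA n := by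
  unfold Xi omegaA
  rw [Finset.smul_sum, ← Finset.sum_add_distrib]
  refine Finset.sum_congr rfl fun p _ => ?_
  have : ∀ q, eL n p * eR n q * EUu n u p q
      = eL n p * eR n q * EUu n v p q
        + (if p = q then (u-v) • (eL n p * eR n q) else 0) := by
    intro q
    rw [EUu_shift u v, mul_add]
    congr 1
    rw [mul_ite, mul_smul_comm, mul_one, mul_zero]
  simp only [this]
  rw [Finset.sum_add_distrib]
  congr 1
  rw [Finset.sum_ite_eq (Finset.univ) p (fun q => (u-v) • (eL n p * eR n q))]
  simp

lemma commute_eLeR_eL (p q x : Fin (n+1)) : Commute (eL n p * eR n q) (eL n x) := by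
  unfold Commute SemiconjBy
  calc (eL n p * eR n q) * eL n x = eL n p * (-(eL n x * eR n q)) := by
        rw [mul_assoc, eR_mul_eL]
    _ = -(eL n p * eL n x) * eR n q := by simp only [mul_neg, neg_mul, mul_assoc]
    _ = (eL n x * eL n p) * eR n q := by rw [← eL_mul_eL]
    _ = eL n x * (eL n p * eR n q) := by rw [mul_assoc]

lemma commute_eLeR_eR (p q x : Fin (n+1)) : Commute (eL n p * eR n q) (eR n x) := by
  unfold Commute SemiconjBy
  calc (eL n p * eR n q) * eR n x = eL n p * (-(eR n x * eR n q)) := by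
        rw [mul_assoc, eR_mul_eR]
    _ = -(eL n p * eR n x) * eR n q := by simp only [mul_neg, neg_mul, mul_assoc]
    _ = (eR n x * eL n p) * eR n q := by rw [← eR_mul_eL]
    _ = eR n x * (eL n p * eR n q) := by rw [mul_assoc]

lemma commute_eLeR_EUu (p q x y : Fin (n+1)) (u : ℂ) :
    Commute (eL n p * eR n q) (EUu n u x y) := by
  unfold Commute SemiconjBy
  rw [mul_assoc, ← EUu_comm_eR, ← mul_assoc, ← EUu_comm_eL, mul_assoc]

lemma commute_omega_Xi (u : ℂ) : Commute (omegaA n) (Xi n u) := by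
  refine Commute.sum_left _ _ _ fun p _ => ?_
  refine Commute.sum_right _ _ _ fun c _ => ?_
  refine Commute.sum_right _ _ _ fun d _ => ?_
  exact ((commute_eLeR_eL p p c).mul_right (commute_eLeR_eR p p d)).mul_right
    (commute_eLeR_EUu p p c d u)

lemma commute_Xi_Xi (u v : ℂ) : Commute (Xi n u) (Xi n v) := by
  rw [Xi_shift u v]
  exact Commute.add_left (Commute.refl _) ((commute_omega_Xi v).smul_left _)

lemma commute_eL_Xi (x : Fin (n+1)) (u : ℂ) : Commute (eL n x) (Xi n u) := by
  refine Commute.sum_right _ _ _ fun c _ => ?_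
  refine Commute.sum_right _ _ _ fun d _ => ?_
  have h1 : eL n x * (eL n c * eR n d * EUu n u c d)
      = (eL n c * eR n d) * (eL n x * EUu n u c d) := by
    rw [← mul_assoc, ((commute_eLeR_eL c d x).symm.eq), mul_assoc]
  unfold Commute SemiconjBy
  rw [h1, ← EUu_comm_eL, ← mul_assoc]

lemma XiPow_zero (u : ℂ) : XiPow n 0 u = 1 := by
  simp [XiPow]

lemma XiPow_succ (k : ℕ) (u : ℂ) :
    XiPow n (k+1) u = XiPow n k u * Xi n (u - k) := by
  unfold XiPow
  rw [List.range_succ, List.map_append, List.prod_append]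
  simp

lemma commute_Xi_XiPow (v : ℂ) (k : ℕ) (u : ℂ) : Commute (Xi n v) (XiPow n k u) := by
  induction k with
  | zero => rw [XiPow_zero]; exact Commute.one_right _
  | succ k ih => rw [XiPow_succ]; exact ih.mul_right (commute_Xi_Xi v _)

lemma XiPow_succ_front (k : ℕ) (u : ℂ) :
    XiPow n (k+1) u = Xi n (u - k) * XiPow n k u := by
  rw [XiPow_succ, (commute_Xi_XiPow (u - k) k u).eq]

lemma eL_mul_etaR (x : Fin (n+1)) (u : ℂ) (i : Fin (n+1)) :
    eL n x * etaR n u i = -(etaR n u i * eL n x) := by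
  unfold etaR
  rw [Finset.mul_sum, Finset.sum_mul, ← Finset.sum_neg_distrib]
  refine Finset.sum_congr rfl fun q _ => ?_
  calc eL n x * (eR n q * EUu n u i q)
      = (eL n x * eR n q) * EUu n u i q := by rw [mul_assoc]
    _ = -(eR n q * eL n x) * EUu n u i q := by rw [eL_mul_eR]
    _ = -(eR n q * (EUu n u i q * eL n x)) := by
        rw [EUu_comm_eL]; simp only [neg_mul, mul_assoc]
    _ = -(eR n q * EUu n u i q * eL n x) := by rw [mul_assoc]

lemma Xi_eq_sum_etaR (u : ℂ) : Xi n u = ∑ p : Fin (n+1), eL n p * etaR n u p := by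
  unfold Xi etaR
  refine Finset.sum_congr rfl fun p _ => ?_
  rw [Finset.mul_sum]
  exact Finset.sum_congr rfl fun q _ => mul_assoc _ _ _

noncomputable def fprodL (n : ℕ) (l : List (Fin (n+1))) : AlgA n := (l.map (eL n)).prod

lemma fprodL_nil : fprodL n [] = 1 := rfl

lemma fprodL_cons (c : Fin (n+1)) (l : List (Fin (n+1))) :
    fprodL n (c :: l) = eL n c * fprodL n l := by
  unfold fprodL; rw [List.map_cons, List.prod_cons]

lemma fprodL_append_single (l : List (Fin (n+1))) (c : Fin (n+1)) :
    fprodL n (l ++ [c]) = fprodL n l * eL n c := by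
  unfold fprodL
  rw [List.map_append, List.prod_append, List.map_singleton, List.prod_singleton]

lemma fprodL_mul_anti (w : AlgA n) (hw : ∀ x, eL n x * w = -(w * eL n x))
    (l : List (Fin (n+1))) :
    fprodL n l * w = ((-1:ℂ)^l.length) • (w * fprodL n l) := by
  induction l with
  | nil => simp [fprodL_nil]
  | cons c t ih =>
    rw [fprodL_cons, mul_assoc, ih, mul_smul_comm, ← mul_assoc, hw c, List.length_cons,
      pow_succ, mul_smul, neg_one_smul, neg_mul, mul_assoc, smul_neg]

lemma fprodL_mul_eL_mem (l : List (Fin (n+1))) (c : Fin (n+1)) (hc : c ∈ l) :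
    fprodL n l * eL n c = 0 := by
  induction l with
  | nil => simp at hc
  | cons a t ih =>
    rw [fprodL_cons, mul_assoc]
    rcases List.mem_cons.mp hc with rfl | hct
    · rw [fprodL_mul_anti (eL n c) (fun x => eL_mul_eL x c) t, mul_smul_comm,
        ← mul_assoc, eL_mul_self, zero_mul, smul_zero]
    · rw [ih hct, mul_zero]

end Struct

section Main
variable {n : ℕ}

lemma swapLL (x y : Fin (n+1)) (X : AlgA n) :
    eL n x * (eL n y * X) = -(eL n y * (eL n x * X)) := by
  rw [← mul_assoc, eL_mul_eL, neg_mul, mul_assoc]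

lemma swapEtaL (u : ℂ) (c y : Fin (n+1)) (X : AlgA n) :
    etaR n u c * (eL n y * X) = -(eL n y * (etaR n u c * X)) := by
  have h : etaR n u c * eL n y = -(eL n y * etaR n u c) := by rw [eL_mul_etaR, neg_neg]
  rw [← mul_assoc, h, neg_mul, mul_assoc]

lemma cancel1 (x : Fin (n+1)) (u : ℂ) (W : AlgA n) :
    eL n x * (etaR n u x * (eL n x * W)) = 0 := by
  rw [swapEtaL, mul_neg, ← mul_assoc, eL_mul_self, zero_mul, neg_zero]

lemma eL_mul_wd (x d c : Fin (n+1)) (u : ℂ) :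
    eL n x * (eR n d * EUu n u c d) = -((eR n d * EUu n u c d) * eL n x) := by
  calc eL n x * (eR n d * EUu n u c d)
      = (eL n x * eR n d) * EUu n u c d := (mul_assoc _ _ _).symm
    _ = (-(eR n d * eL n x)) * EUu n u c d := by rw [eL_mul_eR]
    _ = -((eR n d) * (eL n x * EUu n u c d)) := by rw [neg_mul, mul_assoc]
    _ = -((eR n d) * (EUu n u c d * eL n x)) := by rw [← EUu_comm_eL]
    _ = -((eR n d * EUu n u c d) * eL n x) := by rw [← mul_assoc]

lemma ind (k : ℕ) : ∀ (u : ℂ) (l : List (Fin (n+1))) (p i : Fin (n+1)),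
    l.Nodup → l.length + k = n → p ∉ l → i ∉ l →
    fprodL n l * eL n p * etaR n u p * XiPow n k (u + k)
      = fprodL n l * eL n i * etaR n u i * XiPow n k (u + k) := by
  induction k with
  | zero =>
    intro u l p i hnd hlen hp hi
    have hpi : p = i := by
      by_contra hne
      have hcard : l.toFinset.card = n := by
        rw [List.toFinset_card_of_nodup hnd]; simpa using hlen
      have hc1 : (insert i l.toFinset).card = n + 1 := by
        rw [Finset.card_insert_of_notMem (by simpa using hi), hcard]
      have hc2 : (insert p (insert i l.toFinset)).card = n + 2 := by
        rw [Finset.card_insert_of_notMem, hc1]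
        rw [Finset.mem_insert]
        push_neg
        exact ⟨hne, by simpa using hp⟩
      have hle := Finset.card_le_card (Finset.subset_univ (insert p (insert i l.toFinset)))
      rw [hc2, Finset.card_univ, Fintype.card_fin] at hle
      omega
    subst hpi; rfl
  | succ k ih =>
    intro u l p i hnd hlen hp hi
    rcases eq_or_ne p i with rfl | hpi
    · rfl
    have hXi : XiPow n (k+1) (u + ((k+1:ℕ):ℂ))
        = Xi n (u+1) * XiPow n k ((u+1) + (k:ℕ)) := by
      rw [XiPow_succ_front]
      congr 1
      · congr 1; push_cast; ring
      · congr 1; push_cast; ring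
    rw [hXi]
    have key : ∀ x : Fin (n+1),
        fprodL n l * eL n x * etaR n u x
            * (Xi n (u+1) * XiPow n k ((u+1) + (k:ℕ)))
        = fprodL n l * (eL n x * (etaR n u x * Xi n (u+1)
            * XiPow n k ((u+1) + (k:ℕ)))) := by
      intro x; simp only [mul_assoc]
    rw [key p, key i, etaR_Xi u p, etaR_Xi u i]
    have key2 : ∀ x : Fin (n+1),
        fprodL n l * (eL n x * (Xi n u * etaR n (u+1) x
            * XiPow n k ((u+1) + (k:ℕ))))
        = fprodL n l * (Xi n u
            * (eL n x * (etaR n (u+1) x * XiPow n k ((u+1) + (k:ℕ))))) := by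
      intro x
      rw [mul_assoc (Xi n u), ← mul_assoc (eL n x), (commute_eL_Xi x u).eq]
      simp only [mul_assoc]
    rw [key2 p, key2 i]
    set Y := XiPow n k ((u+1) + (k:ℕ)) with hY
    set Dp := eL n p * (etaR n (u+1) p * Y) with hDp
    set Di := eL n i * (etaR n (u+1) i * Y) with hDi
    rw [← sub_eq_zero, ← mul_sub, ← mul_sub, Xi_eq_sum_etaR u, Finset.sum_mul,
      Finset.mul_sum]
    have hsummand : ∀ c : Fin (n+1), fprodL n l * (eL n c * etaR n u c * (Dp - Di))
        = fprodL n l * (eL n c * (etaR n u c * (Dp - Di))) := by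
      intro c; simp only [mul_assoc]
    simp only [hsummand]
    rw [← Finset.add_sum_erase Finset.univ
        (fun c => fprodL n l * (eL n c * (etaR n u c * (Dp - Di)))) (Finset.mem_univ p),
      ← Finset.add_sum_erase (Finset.univ.erase p)
        (fun c => fprodL n l * (eL n c * (etaR n u c * (Dp - Di))))
        (Finset.mem_erase.mpr ⟨Ne.symm hpi, Finset.mem_univ i⟩)]
    have hrest : ∑ c ∈ (Finset.univ.erase p).erase i,
        fprodL n l * (eL n c * (etaR n u c * (Dp - Di))) = 0 := by
      refine Finset.sum_eq_zero fun c hc => ?_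
      obtain ⟨hci, hcp⟩ : c ≠ i ∧ c ≠ p := by
        have h1 := Finset.mem_erase.mp hc
        have h2 := Finset.mem_erase.mp h1.2
        exact ⟨h1.1, h2.1⟩
      by_cases hcl : c ∈ l
      · have hzz : fprodL n l * (eL n c * (etaR n u c * (Dp - Di)))
            = (fprodL n l * eL n c) * (etaR n u c * (Dp - Di)) := by
          simp only [mul_assoc]
        rw [hzz, fprodL_mul_eL_mem l c hcl, zero_mul]
      · have hnd' : (l ++ [c]).Nodup := by
          rw [List.nodup_append]
          exact ⟨hnd, List.nodup_singleton c, fun a ha b hb => by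
              simp only [List.mem_singleton] at hb; subst hb; exact fun h => hcl (h ▸ ha)⟩
        have hlen' : (l ++ [c]).length + k = n := by
          rw [List.length_append, List.length_singleton]; omega
        have hp' : p ∉ l ++ [c] := by
          simp only [List.mem_append, List.mem_singleton]
          push_neg
          exact ⟨hp, fun h => hcp (by rw [h])⟩
        have hi' : i ∉ l ++ [c] := by
          simp only [List.mem_append, List.mem_singleton]
          push_neg
          exact ⟨hi, fun h => hci (by rw [h])⟩
        have hIH : fprodL n (l ++ [c]) * (Dp - Di) = 0 := by
          rw [mul_sub, sub_eq_zero, hDp, hDi, hY]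
          have h := ih (u+1) (l ++ [c]) p i hnd' hlen' hp' hi'
          simpa only [mul_assoc] using h
        have hexp : etaR n u c * (Dp - Di)
            = ∑ d : Fin (n+1), (eR n d * EUu n u c d) * (Dp - Di) := by
          rw [etaR, Finset.sum_mul]
        rw [hexp, Finset.mul_sum, Finset.mul_sum]
        refine Finset.sum_eq_zero fun d _ => ?_
        calc fprodL n l * (eL n c * ((eR n d * EUu n u c d) * (Dp - Di)))
            = (fprodL n (l ++ [c]) * (eR n d * EUu n u c d)) * (Dp - Di) := by
              rw [fprodL_append_single]; simp only [mul_assoc]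
          _ = (((-1:ℂ)^(l ++ [c]).length)
                • ((eR n d * EUu n u c d) * fprodL n (l ++ [c]))) * (Dp - Di) := by
              rw [fprodL_mul_anti _ (fun x => eL_mul_wd x d c u)]
          _ = ((-1:ℂ)^(l ++ [c]).length)
                • ((eR n d * EUu n u c d) * (fprodL n (l ++ [c]) * (Dp - Di))) := by
              rw [smul_mul_assoc, mul_assoc]
          _ = 0 := by rw [hIH, mul_zero, smul_zero]
    rw [hrest, add_zero]
    have hFp : fprodL n l * (eL n p * (etaR n u p * (Dp - Di)))
        = fprodL n l * (eL n p * (eL n i * (etaR n u p * (etaR n (u+1) i * Y)))) := by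
      rw [hDp, hDi, mul_sub (etaR n u p), mul_sub (eL n p), cancel1, swapEtaL, mul_neg,
        zero_sub, neg_neg]
    have hFi : fprodL n l * (eL n i * (etaR n u i * (Dp - Di)))
        = fprodL n l * (eL n p * (eL n i * (etaR n u i * (etaR n (u+1) p * Y)))) := by
      rw [hDp, hDi, mul_sub (etaR n u i), mul_sub (eL n i), cancel1, sub_zero, swapEtaL,
        mul_neg, swapLL, neg_neg]
    rw [hFp, hFi, ← mul_add, ← mul_add, ← mul_add]
    have hpair : etaR n u p * (etaR n (u+1) i * Y) + etaR n u i * (etaR n (u+1) p * Y)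
        = 0 := by
      rw [← mul_assoc, ← mul_assoc, ← add_mul, etaR_pair, zero_mul]
    rw [hpair, mul_zero, mul_zero, mul_zero]

end Main


/-- Let `n ≥ 1`.  In `A = Λ ⊗ U(𝔤𝔩_{n+1}(ℂ))`, for all `i ≠ j` and all
`u ∈ ℂ`:  `e_j Ξ^{(n)}(u+n−1) = n e_j e_i η_i'(u) Ξ^{(n−1)}(u+n−1)`. -/
theorem eL_XiPow_expansion (n : ℕ) (hn : 1 ≤ n) (i j : Fin (n+1)) (hij : i ≠ j) (u : ℂ) :
    eL n j * XiPow n n (u + n - 1)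
      = n • (eL n j * eL n i * etaR n u i * XiPow n (n-1) (u + n - 1)) := by
  obtain ⟨m, rfl⟩ : ∃ m, n = m + 1 := ⟨n - 1, (Nat.succ_pred_eq_of_pos hn).symm⟩
  simp only [Nat.add_sub_cancel]
  have hXi : XiPow (m+1) (m+1) (u + ((m+1:ℕ):ℂ) - 1)
      = Xi (m+1) u * XiPow (m+1) m (u + ((m+1:ℕ):ℂ) - 1) := by
    rw [XiPow_succ_front]
    congr 2
    push_cast; ring
  rw [hXi]
  have hargX : (u : ℂ) + ((m : ℕ) : ℂ) = u + ((m+1:ℕ):ℂ) - 1 := by push_cast; ring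
  have hterm : ∀ c : Fin (m+1+1), c ≠ j →
      eL (m+1) j * (eL (m+1) c * etaR (m+1) u c * XiPow (m+1) m (u + ((m+1:ℕ):ℂ) - 1))
      = eL (m+1) j * (eL (m+1) i * etaR (m+1) u i * XiPow (m+1) m (u + ((m+1:ℕ):ℂ) - 1)) := by
    intro c hc
    have h := ind (n := m+1) m u [j] c i (List.nodup_singleton j)
      (by rw [List.length_singleton]; omega) (by simpa using hc) (by simpa using hij)
    rw [hargX] at h
    have hfj : fprodL (m+1) [j] = eL (m+1) j := by
      rw [fprodL_cons, fprodL_nil, mul_one]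
    rw [hfj] at h
    simpa only [mul_assoc] using h
  calc eL (m+1) j * (Xi (m+1) u * XiPow (m+1) m (u + ((m+1:ℕ):ℂ) - 1))
      = ∑ c : Fin (m+1+1),
          eL (m+1) j * (eL (m+1) c * etaR (m+1) u c * XiPow (m+1) m (u + ((m+1:ℕ):ℂ) - 1)) := by
        rw [Xi_eq_sum_etaR u, Finset.sum_mul, Finset.mul_sum]
    _ = ∑ c ∈ Finset.univ.erase j,
          eL (m+1) j * (eL (m+1) c * etaR (m+1) u c * XiPow (m+1) m (u + ((m+1:ℕ):ℂ) - 1)) := by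
        rw [← Finset.add_sum_erase Finset.univ _ (Finset.mem_univ j)]
        have hz : eL (m+1) j * (eL (m+1) j * etaR (m+1) u j
            * XiPow (m+1) m (u + ((m+1:ℕ):ℂ) - 1)) = 0 := by
          rw [← mul_assoc, ← mul_assoc, eL_mul_self, zero_mul, zero_mul]
        rw [hz, zero_add]
    _ = ∑ _c ∈ Finset.univ.erase j,
          eL (m+1) j * (eL (m+1) i * etaR (m+1) u i * XiPow (m+1) m (u + ((m+1:ℕ):ℂ) - 1)) := by
        exact Finset.sum_congr rfl fun c hc => hterm c (Finset.mem_erase.mp hc).1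
    _ = (m+1) • (eL (m+1) j * eL (m+1) i * etaR (m+1) u i
          * XiPow (m+1) m (u + ((m+1:ℕ):ℂ) - 1)) := by
        rw [Finset.sum_const, Finset.card_erase_of_mem (Finset.mem_univ j),
          Finset.card_univ, Fintype.card_fin]
        simp only [Nat.add_sub_cancel]
        congr 1
        simp only [mul_assoc]
end
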